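/- arXiv:1506.06656 — 2 statements merged into one kernel-verified Lean document; each statement's English description precedes it below -/
import Mathlib

section
/- The subdifferential of the indicator function of the convex set C = {x ∈ ℝⁿ | φ(x) ≤ 0}, where φ : ℝⁿ → ℝᵏ has convex differentiable components and C satisfies Slater's condition (there is x̄ with φ(x̄) < 0 componentwise), equals at every x ∈ C the set {∑ᵢ λᵢ ∇φᵢ(x) | λ ≥ 0, λᵢ φᵢ(x) = 0 for all i}; and at x ∉ C the subdifferential is empty. -/
/-!
The subgradients of the indicator of `C` at `x ∈ C` form the normal cone of `C` at `x`, and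
there are none outside `C` because `C` is nonempty. A nonnegative combination of active
gradients is normal by the gradient inequality `⟪∇φᵢ x, y - x⟫ ≤ φᵢ y - φᵢ x`. Conversely, let
`g` be normal. If `⟪∇φᵢ x, w⟫ < 0` for every active `i`, then `x + t • w ∈ C` for small `t > 0`,
so `⟪g, w⟫ ≤ 0`. Slater's point `x₀` gives `⟪∇φᵢ x, x₀ - x⟫ ≤ φᵢ x₀ < 0` for active `i`, so
perturbing `d` to `d + ε • (x₀ - x)` and letting `ε → 0` yields `⟪g, d⟫ ≤ 0` whenever
`⟪∇φᵢ x, d⟫ ≤ 0` for all active `i`. Farkas' lemma, which applies because finitely generated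
cones are closed, then puts `g` in the cone spanned by the active gradients.
-/

open Classical

open RealInnerProductSpace

open Filter Set Topology

section NonnegSpan

variable {ι E : Type*} [Fintype ι] [AddCommGroup E] [Module ℝ E]

def nonnegSpan (v : ι → E) : PointedCone ℝ E :=
  (PointedCone.positive ℝ (ι → ℝ)).map (Fintype.linearCombination ℝ v)

lemma mem_nonnegSpan {v : ι → E} {z : E} :
    z ∈ nonnegSpan v ↔ ∃ l : ι → ℝ, (∀ i, 0 ≤ l i) ∧ ∑ i, l i • v i = z := by
  simp [nonnegSpan, PointedCone.mem_map, Fintype.linearCombination_apply, Pi.le_def]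

lemma mem_nonnegSpan_self (v : ι → E) (i : ι) : v i ∈ nonnegSpan v :=
  mem_nonnegSpan.2 ⟨Pi.single i 1, fun j => by simp [Pi.single_apply, apply_ite],
    by simp [Pi.single_apply, ite_smul]⟩

lemma nonnegSpan_comp_le {κ : Type*} [Fintype κ] (v : ι → E) (f : κ → ι) :
    nonnegSpan (v ∘ f) ≤ nonnegSpan v := by
  intro z hz
  obtain ⟨l, hl, rfl⟩ := mem_nonnegSpan.1 hz
  exact Submodule.sum_mem _ fun k _ =>
    PointedCone.smul_mem _ (hl k) (mem_nonnegSpan_self v (f k))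

lemma nonnegSpan_comp_equiv {κ : Type*} [Fintype κ] (v : ι → E) (e : κ ≃ ι) :
    nonnegSpan (v ∘ e) = nonnegSpan v := by
  refine le_antisymm (nonnegSpan_comp_le v e) ?_
  simpa [Function.comp_def] using nonnegSpan_comp_le (v ∘ e) e.symm

lemma exists_nonneg_eq_zero_of_sum_smul_eq_zero {v : ι → E} {c : ι → ℝ}
    (hc : ∑ i, c i • v i = 0) {j₀ : ι} (hj₀ : c j₀ < 0) {l : ι → ℝ} (hl : ∀ i, 0 ≤ l i) :
    ∃ l' : ι → ℝ, (∀ i, 0 ≤ l' i) ∧ (∃ j, l' j = 0) ∧ ∑ i, l' i • v i = ∑ i, l i • v i := by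
  -- Move from `l` along the relation `c` until the first coefficient vanishes.
  obtain ⟨j, hj, hmin⟩ := (Finset.univ.filter (c · < 0)).exists_min_image
    (fun i => l i / -c i) ⟨j₀, by simpa using hj₀⟩
  simp only [Finset.mem_filter, Finset.mem_univ, true_and] at hj hmin
  set t := l j / -c j with ht
  have ht₀ : 0 ≤ t := div_nonneg (hl j) (by linarith)
  refine ⟨fun i => l i + t * c i, fun i => ?_, ⟨j, ?_⟩, ?_⟩
  · rcases le_or_gt 0 (c i) with hci | hci
    · nlinarith [hl i]
    · have := (le_div_iff₀ (neg_pos.2 hci)).1 (hmin i hci)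
      linarith
  · rw [ht]; field_simp [hj.ne]; ring
  · simp [add_smul, mul_smul, Finset.sum_add_distrib, ← Finset.smul_sum, hc]

lemma nonnegSpan_eq_iUnion_succAbove {m : ℕ} {v : Fin (m + 1) → E}
    (hv : ¬ LinearIndependent ℝ v) :
    (nonnegSpan v : Set E) = ⋃ j : Fin (m + 1), (nonnegSpan (v ∘ j.succAbove) : Set E) := by
  refine subset_antisymm (fun z hz => ?_) (iUnion_subset fun j => nonnegSpan_comp_le v _)
  obtain ⟨c, hc, j₀, hj₀⟩ : ∃ c : Fin (m + 1) → ℝ, ∑ i, c i • v i = 0 ∧ ∃ j, c j < 0 := by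
    obtain ⟨c, hc, j, hj⟩ := Fintype.not_linearIndependent_iff.1 hv
    rcases hj.lt_or_gt with hj | hj
    · exact ⟨c, hc, j, hj⟩
    · exact ⟨-c, by simp [neg_smul, hc], j, by simpa using hj⟩
  obtain ⟨l, hl, rfl⟩ := mem_nonnegSpan.1 hz
  obtain ⟨l', hl', ⟨j, hj⟩, hsum⟩ := exists_nonneg_eq_zero_of_sum_smul_eq_zero hc hj₀ hl
  refine mem_iUnion.2 ⟨j, mem_nonnegSpan.2 ⟨l' ∘ j.succAbove, fun i => hl' _, ?_⟩⟩
  rw [← hsum, Fin.sum_univ_succAbove _ j, hj, zero_smul, zero_add]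
  rfl

end NonnegSpan

section Closed

variable {ι E : Type*} [Fintype ι] [AddCommGroup E] [Module ℝ E] [TopologicalSpace E]
  [IsTopologicalAddGroup E] [ContinuousSMul ℝ E] [T2Space E]

lemma isClosed_nonnegSpan_of_linearIndependent {v : ι → E} (hv : LinearIndependent ℝ v) :
    IsClosed (nonnegSpan v : Set E) := by
  rw [nonnegSpan, PointedCone.coe_map]
  exact (LinearMap.isClosedEmbedding_of_injective
    (LinearMap.ker_eq_bot.2 hv.fintypeLinearCombination_injective)).isClosedMap _ isClosed_Ici

theorem isClosed_nonnegSpan (v : ι → E) : IsClosed (nonnegSpan v : Set E) := by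
  suffices ∀ (m : ℕ) (v : Fin m → E), IsClosed (nonnegSpan v : Set E) by
    rw [← nonnegSpan_comp_equiv v (Fintype.equivFin ι).symm]
    exact this _ _
  intro m
  induction m with
  | zero => exact fun v => isClosed_nonnegSpan_of_linearIndependent linearIndependent_empty_type
  | succ m ih =>
    intro v
    by_cases hv : LinearIndependent ℝ v
    · exact isClosed_nonnegSpan_of_linearIndependent hv
    · rw [nonnegSpan_eq_iUnion_succAbove hv]
      exact isClosed_iUnion_of_finite fun j => ih _

end Closed

section Farkas

variable {ι E : Type*} [Fintype ι] [NormedAddCommGroup E] [InnerProductSpace ℝ E]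
  [FiniteDimensional ℝ E]

theorem mem_nonnegSpan_of_forall_inner_nonpos {v : ι → E} {g : E}
    (h : ∀ d, (∀ i, ⟪v i, d⟫ ≤ 0) → ⟪g, d⟫ ≤ 0) : g ∈ nonnegSpan v := by
  by_contra hg
  obtain ⟨y, hy, hgy⟩ :=
    ProperCone.hyperplane_separation' ⟨nonnegSpan v, isClosed_nonnegSpan v⟩ hg
  have := h (-y) fun i => by simpa [inner_neg_right] using hy _ (mem_nonnegSpan_self v i)
  rw [inner_neg_right] at this
  linarith

end Farkas

lemma HasDerivAt.eventually_nhdsGT_lt {f : ℝ → ℝ} {f' a : ℝ} (hf : HasDerivAt f f' a)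
    (hf' : f' < 0) : ∀ᶠ t in 𝓝[>] a, f t < f a := by
  filter_upwards [hf.hasDerivWithinAt.limsup_slope_le' (lt_irrefl a) hf', self_mem_nhdsWithin]
    with t hslope (ht : a < t)
  rw [slope_def_field, div_lt_iff₀ (sub_pos.2 ht)] at hslope
  linarith

section Gradient

variable {E : Type*} [NormedAddCommGroup E] [InnerProductSpace ℝ E] [CompleteSpace E]

theorem ConvexOn.inner_sub_le_sub_of_hasGradientAt {s : Set E} {f : E → ℝ} {g x y : E}
    (hf : ConvexOn ℝ s f) (hx : x ∈ s) (hy : y ∈ s) (hg : HasGradientAt f g x) :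
    ⟪g, y - x⟫ ≤ f y - f x := by
  have hderiv : HasDerivAt (f ∘ AffineMap.lineMap (k := ℝ) x y) ⟪g, y - x⟫ 0 := by
    rw [← AffineMap.lineMap_apply_zero x y (k := ℝ)] at hg
    exact hg.hasFDerivAt.comp_hasDerivAt 0 AffineMap.hasDerivAt_lineMap
  simpa [slope_def_field] using (hf.comp_affineMap (AffineMap.lineMap x y)).le_slope_of_hasDerivAt
    (by simpa using hx) (by simpa using hy) zero_lt_one hderiv

end Gradient

section Subgradients

variable {E : Type*} [NormedAddCommGroup E] [InnerProductSpace ℝ E] {C : Set E} {x : E}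

def normalCone (C : Set E) (x : E) : Set E := {g | ∀ y ∈ C, ⟪g, y - x⟫ ≤ 0}

def subgradients (f : E → EReal) (x : E) : Set E :=
  {g | ∀ y, f x + ((⟪g, y - x⟫ : ℝ) : EReal) ≤ f y}

lemma subgradients_indicator_of_mem (hx : x ∈ C) :
    subgradients (fun y => if y ∈ C then (0 : EReal) else ⊤) x = normalCone C x := by
  ext g
  refine forall_congr' fun y => ?_
  by_cases hy : y ∈ C <;> simp [hx, hy]

lemma subgradients_indicator_of_notMem (hx : x ∉ C) (hC : C.Nonempty) :
    subgradients (fun y => if y ∈ C then (0 : EReal) else ⊤) x = ∅ := by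
  obtain ⟨y, hy⟩ := hC
  refine eq_empty_of_forall_notMem fun g hg => ?_
  have := hg y
  simp [hx, hy] at this

end Subgradients

section Constraints

variable {ι E : Type*} [Fintype ι] [NormedAddCommGroup E] [InnerProductSpace ℝ E]
  [CompleteSpace E] {φ : ι → E → ℝ} {gφ : ι → E} {x : E}

lemma eventually_forall_nonpos_add_smul (hgrad : ∀ i, HasGradientAt (φ i) (gφ i) x)
    (hx : ∀ i, φ i x ≤ 0) {w : E} (hw : ∀ i, φ i x = 0 → ⟪gφ i, w⟫ < 0) :
    ∀ᶠ t in 𝓝[>] (0 : ℝ), ∀ i, φ i (x + t • w) ≤ 0 := by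
  refine eventually_all.2 fun i => ?_
  have hline : HasDerivAt (fun t : ℝ => φ i (x + t • w)) ⟪gφ i, w⟫ 0 :=
    (hgrad i).hasFDerivAt.hasLineDerivAt w
  rcases (hx i).eq_or_lt with hact | hinact
  · filter_upwards [hline.eventually_nhdsGT_lt (hw i hact)] with t ht
    simpa [hact] using ht.le
  · have hcont : Tendsto (fun t : ℝ => φ i (x + t • w)) (𝓝[>] 0) (𝓝 (φ i x)) := by
      simpa using hline.continuousAt.continuousWithinAt.tendsto
    exact (hcont.eventually_lt_const hinact).mono fun t ht => ht.le

lemma inner_nonpos_of_mem_normalCone_of_forall_inner_neg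
    (hgrad : ∀ i, HasGradientAt (φ i) (gφ i) x) (hx : ∀ i, φ i x ≤ 0) {g w : E}
    (hg : g ∈ normalCone {y | ∀ i, φ i y ≤ 0} x) (hw : ∀ i, φ i x = 0 → ⟪gφ i, w⟫ < 0) :
    ⟪g, w⟫ ≤ 0 := by
  obtain ⟨t, hfeas, ht⟩ :=
    ((eventually_forall_nonpos_add_smul hgrad hx hw).and self_mem_nhdsWithin).exists
  have := hg _ hfeas
  rw [add_sub_cancel_left, real_inner_smul_right] at this
  exact nonpos_of_mul_nonpos_right this ht

lemma inner_nonpos_of_mem_normalCone (hconv : ∀ i, ConvexOn ℝ univ (φ i))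
    (hgrad : ∀ i, HasGradientAt (φ i) (gφ i) x) (hx : ∀ i, φ i x ≤ 0)
    (hslater : ∃ x₀, ∀ i, φ i x₀ < 0) {g d : E}
    (hg : g ∈ normalCone {y | ∀ i, φ i y ≤ 0} x) (hd : ∀ i, φ i x = 0 → ⟪gφ i, d⟫ ≤ 0) :
    ⟪g, d⟫ ≤ 0 := by
  obtain ⟨x₀, hx₀⟩ := hslater
  have hdesc : ∀ i, φ i x = 0 → ⟪gφ i, x₀ - x⟫ < 0 := fun i hi => by
    linarith [(hconv i).inner_sub_le_sub_of_hasGradientAt (mem_univ x) (mem_univ x₀) (hgrad i),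
      hx₀ i]
  have hpert : ∀ ε > (0 : ℝ), ⟪g, d⟫ + ε * ⟪g, x₀ - x⟫ ≤ 0 := fun ε hε => by
    have := inner_nonpos_of_mem_normalCone_of_forall_inner_neg hgrad hx hg
      (w := d + ε • (x₀ - x)) fun i hi => by
        rw [inner_add_right, real_inner_smul_right]
        nlinarith [hd i hi, hdesc i hi]
    rwa [inner_add_right, real_inner_smul_right] at this
  have hlim : Tendsto (fun ε : ℝ => ⟪g, d⟫ + ε * ⟪g, x₀ - x⟫) (𝓝[>] 0) (𝓝 ⟪g, d⟫) := by
    exact (Continuous.tendsto' (by fun_prop) 0 _ (by simp)).mono_left nhdsWithin_le_nhds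
  exact le_of_tendsto hlim (eventually_nhdsWithin_of_forall hpert)

lemma sum_smul_mem_normalCone (hconv : ∀ i, ConvexOn ℝ univ (φ i))
    (hgrad : ∀ i, HasGradientAt (φ i) (gφ i) x) {lam : ι → ℝ} (hlam : ∀ i, 0 ≤ lam i)
    (hcompl : ∀ i, lam i * φ i x = 0) :
    ∑ i, lam i • gφ i ∈ normalCone {y | ∀ i, φ i y ≤ 0} x := by
  intro y hy
  rw [sum_inner]
  calc ∑ i, ⟪lam i • gφ i, y - x⟫ ≤ ∑ i, lam i * φ i y := by
        refine Finset.sum_le_sum fun i _ => ?_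
        rw [real_inner_smul_left]
        nlinarith [(hconv i).inner_sub_le_sub_of_hasGradientAt (mem_univ x) (mem_univ y) (hgrad i),
          hlam i, hcompl i]
    _ ≤ 0 := Finset.sum_nonpos fun i _ => mul_nonpos_of_nonneg_of_nonpos (hlam i) (hy i)

lemma exists_multipliers_of_mem_normalCone [FiniteDimensional ℝ E]
    (hconv : ∀ i, ConvexOn ℝ univ (φ i)) (hgrad : ∀ i, HasGradientAt (φ i) (gφ i) x)
    (hx : ∀ i, φ i x ≤ 0) (hslater : ∃ x₀, ∀ i, φ i x₀ < 0) {g : E}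
    (hg : g ∈ normalCone {y | ∀ i, φ i y ≤ 0} x) :
    ∃ lam : ι → ℝ, (∀ i, 0 ≤ lam i) ∧ (∀ i, lam i * φ i x = 0) ∧ g = ∑ i, lam i • gφ i := by
  -- Only the active constraints contribute: the inactive gradients are replaced by `0`.
  set u : ι → E := fun i => if φ i x = 0 then gφ i else 0
  have hgu : g ∈ nonnegSpan u := mem_nonnegSpan_of_forall_inner_nonpos fun d hd =>
    inner_nonpos_of_mem_normalCone hconv hgrad hx hslater hg fun i hi => by
      simpa [u, hi] using hd i
  obtain ⟨l, hl, rfl⟩ := mem_nonnegSpan.1 hgu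
  refine ⟨fun i => if φ i x = 0 then l i else 0, fun i => ?_, fun i => ?_,
    Finset.sum_congr rfl fun i _ => ?_⟩ <;> by_cases hi : φ i x = 0 <;> simp [u, hi, hl i]

theorem normalCone_setOf_forall_nonpos [FiniteDimensional ℝ E]
    (hconv : ∀ i, ConvexOn ℝ univ (φ i)) (hgrad : ∀ i, HasGradientAt (φ i) (gφ i) x)
    (hx : ∀ i, φ i x ≤ 0) (hslater : ∃ x₀, ∀ i, φ i x₀ < 0) :
    normalCone {y | ∀ i, φ i y ≤ 0} x =
      {g | ∃ lam : ι → ℝ, (∀ i, 0 ≤ lam i) ∧ (∀ i, lam i * φ i x = 0) ∧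
        g = ∑ i, lam i • gφ i} := by
  ext g
  refine ⟨exists_multipliers_of_mem_normalCone hconv hgrad hx hslater, ?_⟩
  rintro ⟨lam, hlam, hcompl, rfl⟩
  exact sum_smul_mem_normalCone hconv hgrad hlam hcompl

end Constraints

/-- The subdifferential of the indicator function of `C = {x | ∀ i, φ i x ≤ 0}`
(with each `φ i` convex and differentiable, and Slater's condition holding)
equals at every `x ∈ C` the set of nonnegative combinations `∑ i, λ i • ∇φ i x`
with complementary slackness, and is empty at every `x ∉ C`. -/
theorem stmt0 {n k : ℕ}
    (φ : Fin k → EuclideanSpace ℝ (Fin n) → ℝ)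
    (gφ : Fin k → EuclideanSpace ℝ (Fin n) → EuclideanSpace ℝ (Fin n))
    (hconv : ∀ i, ConvexOn ℝ Set.univ (φ i))
    (hgrad : ∀ i x, HasGradientAt (φ i) (gφ i x) x)
    (C : Set (EuclideanSpace ℝ (Fin n)))
    (hC : C = {x | ∀ i, φ i x ≤ 0})
    (ind : EuclideanSpace ℝ (Fin n) → EReal)
    (hind : ∀ x, ind x = if x ∈ C then (0 : EReal) else ⊤)
    (subdiff : EuclideanSpace ℝ (Fin n) → Set (EuclideanSpace ℝ (Fin n)))
    (hsubdiff : ∀ x, subdiff x =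
      {g | ∀ y, ind x + ((⟪g, y - x⟫ : ℝ) : EReal) ≤ ind y})
    (slater : ∃ xbar, ∀ i, φ i xbar < 0) :
    (∀ x ∈ C, subdiff x =
      {g | ∃ lam : Fin k → ℝ, (∀ i, 0 ≤ lam i) ∧ (∀ i, lam i * φ i x = 0) ∧
        g = ∑ i, lam i • gφ i x}) ∧
    (∀ x ∉ C, subdiff x = ∅) := by
  obtain rfl : ind = fun y => if y ∈ C then (0 : EReal) else ⊤ := funext hind
  obtain rfl : subdiff = subgradients _ := funext hsubdiff
  subst hC
  refine ⟨fun x hx => ?_, fun x hx => ?_⟩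
  · rw [subgradients_indicator_of_mem hx]
    exact normalCone_setOf_forall_nonpos hconv (fun i => hgrad i x) hx slater
  · obtain ⟨x₀, hx₀⟩ := slater
    exact subgradients_indicator_of_notMem hx ⟨x₀, fun i => (hx₀ i).le⟩
end

section
/- Block elimination formula: let the symmetric block matrix M = [[K_σσ, K_σζ, Φ_σᵀ],[K_σζᵀ, K_ζζ, Φ_ζᵀ],[Φ_σ, Φ_ζ, 0]] with K_σσ, K̄_ζζ := K_ζζ − K_σζᵀK_σσ⁻¹K_σζ, and Ξ := Φ_σK_σσ⁻¹Φ_σᵀ + Φ̄_ζK̄_ζζ⁻¹Φ̄_ζᵀ all invertible, where Φ̄_ζ = Φ_ζ − Φ_σK_σσ⁻¹K_σζ and Φ̄_σ = Φ_σ − Φ̄_ζK̄_ζζ⁻¹K_σζᵀ. Then the (1,1) block of M⁻¹ equals K̄ = K_σσ⁻¹[K_σσ + K_σζ K̄_ζζ⁻¹ K_σζᵀ − Φ̄_σᵀ Ξ⁻¹ Φ̄_σ]K_σσ⁻¹; equivalently, if M(x, y, z)ᵀ = (B, 0, 0)ᵀ then x = K̄B. -/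
open Matrix

/-- Block elimination formula for the consistent tangent: with the symmetric KKT block
matrix `M = [[K_σσ, K_σζ, Φ_σᵀ],[K_σζᵀ, K_ζζ, Φ_ζᵀ],[Φ_σ, Φ_ζ, 0]]`, and
`K̄_ζζ = K_ζζ − K_σζᵀK_σσ⁻¹K_σζ`, `Φ̄_ζ = Φ_ζ − Φ_σK_σσ⁻¹K_σζ`,
`Φ̄_σ = Φ_σ − Φ̄_ζK̄_ζζ⁻¹K_σζᵀ`, `Ξ = Φ_σK_σσ⁻¹Φ_σᵀ + Φ̄_ζK̄_ζζ⁻¹Φ̄_ζᵀ`,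
all of `K_σσ`, `K̄_ζζ`, `Ξ` invertible: if `M (x, y, z)ᵀ = (Bv, 0, 0)ᵀ` then
`x = K̄ Bv` with `K̄ = K_σσ⁻¹[K_σσ + K_σζ K̄_ζζ⁻¹ K_σζᵀ − Φ̄_σᵀ Ξ⁻¹ Φ̄_σ]K_σσ⁻¹`. -/
theorem stmt16 {m q r : ℕ}
    (Kss : Matrix (Fin m) (Fin m) ℝ) (Kzz : Matrix (Fin q) (Fin q) ℝ)
    (Ksz : Matrix (Fin m) (Fin q) ℝ)
    (Φs : Matrix (Fin r) (Fin m) ℝ) (Φz : Matrix (Fin r) (Fin q) ℝ)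
    (hKsssym : Kss.IsSymm) (hKzzsym : Kzz.IsSymm)
    (Kbzz : Matrix (Fin q) (Fin q) ℝ) (hKbzz : Kbzz = Kzz - Kszᵀ * Kss⁻¹ * Ksz)
    (Φbz : Matrix (Fin r) (Fin q) ℝ) (hΦbz : Φbz = Φz - Φs * Kss⁻¹ * Ksz)
    (Φbs : Matrix (Fin r) (Fin m) ℝ) (hΦbs : Φbs = Φs - Φbz * Kbzz⁻¹ * Kszᵀ)
    (Ξ : Matrix (Fin r) (Fin r) ℝ)
    (hΞ : Ξ = Φs * Kss⁻¹ * Φsᵀ + Φbz * Kbzz⁻¹ * Φbzᵀ)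
    (hKss : IsUnit Kss.det) (hKbzzu : IsUnit Kbzz.det) (hΞu : IsUnit Ξ.det)
    (Kbar : Matrix (Fin m) (Fin m) ℝ)
    (hKbar : Kbar = Kss⁻¹ * (Kss + Ksz * Kbzz⁻¹ * Kszᵀ - Φbsᵀ * Ξ⁻¹ * Φbs) * Kss⁻¹)
    (x Bv : Fin m → ℝ) (y : Fin q → ℝ) (z : Fin r → ℝ)
    (h1 : Kss *ᵥ x + Ksz *ᵥ y + Φsᵀ *ᵥ z = Bv)
    (h2 : Kszᵀ *ᵥ x + Kzz *ᵥ y + Φzᵀ *ᵥ z = 0)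
    (h3 : Φs *ᵥ x + Φz *ᵥ y = 0) :
    x = Kbar *ᵥ Bv := by
  have hA1 : Kss⁻¹ * Kss = 1 := nonsing_inv_mul _ hKss
  have hB1 : Kbzz⁻¹ * Kbzz = 1 := nonsing_inv_mul _ hKbzzu
  have hC1 : Ξ⁻¹ * Ξ = 1 := nonsing_inv_mul _ hΞu
  have hAt : (Kss⁻¹)ᵀ = Kss⁻¹ := by
    rw [transpose_nonsing_inv, hKsssym.eq]
  have hKbzzt : Kbzzᵀ = Kbzz := by
    rw [hKbzz, transpose_sub, hKzzsym.eq, transpose_mul, transpose_mul, hAt,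
      transpose_transpose]
    simp [Matrix.mul_assoc]
  have hBt : (Kbzz⁻¹)ᵀ = Kbzz⁻¹ := by rw [transpose_nonsing_inv, hKbzzt]
  have hΦbst : Φbsᵀ = Φsᵀ - Ksz * (Kbzz⁻¹ * Φbzᵀ) := by
    rw [hΦbs, transpose_sub, transpose_mul, transpose_mul, hBt, transpose_transpose]
  have hΦbzt : Φbzᵀ = Φzᵀ - Kszᵀ * (Kss⁻¹ * Φsᵀ) := by
    rw [hΦbz, transpose_sub, transpose_mul, transpose_mul, hAt]
  -- solve for x in terms of y, z
  have hx : x = Kss⁻¹ *ᵥ Bv - (Kss⁻¹ * Ksz) *ᵥ y - (Kss⁻¹ * Φsᵀ) *ᵥ z := by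
    have h1' := congrArg (fun v => Kss⁻¹ *ᵥ v) h1
    simp only [mulVec_add, mulVec_mulVec, hA1, one_mulVec] at h1'
    rw [← h1']; abel
  -- reduced second equation
  have h2' : Kbzz *ᵥ y + Φbzᵀ *ᵥ z = -((Kszᵀ * Kss⁻¹) *ᵥ Bv) := by
    rw [hx] at h2
    simp only [mulVec_sub, mulVec_mulVec] at h2
    rw [hKbzz, hΦbzt]
    simp only [sub_mulVec]
    rw [← sub_eq_zero, ← h2]
    simp only [Matrix.mul_assoc]
    abel
  -- solve for y
  have hy : y = -((Kbzz⁻¹ * (Kszᵀ * Kss⁻¹)) *ᵥ Bv) - (Kbzz⁻¹ * Φbzᵀ) *ᵥ z := by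
    have h2'' := congrArg (fun v => Kbzz⁻¹ *ᵥ v) h2'
    simp only [mulVec_add, mulVec_neg, mulVec_mulVec, hB1, one_mulVec, Matrix.mul_assoc] at h2''
    exact eq_sub_of_add_eq h2''
  -- reduced third equation : Ξ z = Φbs Kss⁻¹ Bv
  have h3' : Ξ *ᵥ z = (Φbs * Kss⁻¹) *ᵥ Bv := by
    rw [hx, hy] at h3
    rw [hΞ]
    apply eq_of_sub_eq_zero
    simp only [hΦbzt, hΦbs, hΦbz, Matrix.mul_sub, Matrix.sub_mul, Matrix.mul_add,
      Matrix.add_mul, sub_mulVec, add_mulVec, neg_mulVec, mulVec_sub, mulVec_add,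
      mulVec_neg, mulVec_mulVec, Matrix.mul_assoc] at h3 ⊢
    have h3n : _ = (0 : Fin r → ℝ) := neg_eq_zero.mpr h3
    rw [← h3n]
    abel
  -- solve for z
  have hz : z = (Ξ⁻¹ * (Φbs * Kss⁻¹)) *ᵥ Bv := by
    have h3'' := congrArg (fun v => Ξ⁻¹ *ᵥ v) h3'
    simp only [mulVec_mulVec, hC1, one_mulVec, Matrix.mul_assoc] at h3''
    simpa [Matrix.mul_assoc] using h3''
  -- matrix identity for Kbar
  have hKbar' : Kbar = Kss⁻¹ + Kss⁻¹ * (Ksz * (Kbzz⁻¹ * (Kszᵀ * Kss⁻¹)))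
      + Kss⁻¹ * (Ksz * (Kbzz⁻¹ * (Φbzᵀ * (Ξ⁻¹ * (Φbs * Kss⁻¹)))))
      - Kss⁻¹ * (Φsᵀ * (Ξ⁻¹ * (Φbs * Kss⁻¹))) := by
    rw [hKbar, hΦbst]
    have h0 : Kss⁻¹ * Kss * Kss⁻¹ = Kss⁻¹ := by rw [hA1, Matrix.one_mul]
    simp only [Matrix.mul_sub, Matrix.sub_mul, Matrix.mul_add, Matrix.add_mul, Matrix.mul_assoc]
    simp only [← Matrix.mul_assoc, h0]
    simp only [Matrix.mul_assoc]
    abel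
  -- put everything together
  rw [hx, hy, hz, hKbar']
  simp only [mulVec_sub, mulVec_add, mulVec_neg, mulVec_mulVec, add_mulVec, sub_mulVec,
    neg_mulVec, Matrix.mul_assoc]
  abel
end
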